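/- arXiv:2108.05578 — 3 statements merged into one kernel-verified Lean document; each statement's English description precedes it below -/
import Mathlib

section
/- Let λ ∈ (0,1) with 1/λ a positive integer, let κ ∈ (0,1) be an accuracy parameter, and let ρ be a bounded measurable function on ℝ², vanishing outside the unit square Q, such that the average of ρ over every tile Q' ∈ T_λ is zero. Then there exists a constant C₁ > 0 depending only on κ such that the geometric mixing scale satisfies G(ρ) ≤ C₁ λ. -/
open MeasureTheory Metric Set

noncomputable section

abbrev E2 : Type := EuclideanSpace ℝ (Fin 2)

/-- The open unit square `Q = (-1/2,1/2)²`. -/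
def Qset : Set E2 := {x : E2 | |x 0| < 1 / 2 ∧ |x 1| < 1 / 2}

/-- The tile of the tiling `T_λ` of `Q` with indices `k, h`. -/
def tile (lam : ℝ) (k h : ℕ) : Set E2 :=
  {x : E2 | (-(1:ℝ)/2 + k * lam < x 0 ∧ x 0 < -(1:ℝ)/2 + (k + 1) * lam) ∧
            (-(1:ℝ)/2 + h * lam < x 1 ∧ x 1 < -(1:ℝ)/2 + (h + 1) * lam)}

/-- The geometric mixing scale with accuracy `κ`: the infimum of all `ε > 0` such that for every
`x` the average of `ρ` over `B(x,ε)` is, in absolute value, less than `κ‖ρ‖_∞`. -/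
def geomMixScale (κ : ℝ) (ρ : E2 → ℝ) : ℝ :=
  sInf {ε : ℝ | 0 < ε ∧
    ∀ x : E2, |⨍ y in ball x ε, ρ y| < κ * (eLpNorm ρ ⊤ volume).toReal}

/-!
Fix a ball `B` of radius `ε`. The tiles contained in `B` contribute nothing to `∫_B ρ`, so only
the part of `B ∩ Q` covered by tiles meeting `∂B` counts; since a tile has diameter `√2 λ`, that
part lies in the annulus `B \ B(x, ε - √2 λ)`, whose measure is at most `2 (√2 λ / ε) |B|`.
Hence `|⨍_B ρ| ≤ 2√2 (λ / ε) ‖ρ‖_∞`, which is below `κ ‖ρ‖_∞` for `ε = 3λ/κ`.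
-/

open Module

theorem ae_norm_le_toReal_eLpNorm_top {α F : Type*} [MeasurableSpace α] [NormedAddCommGroup F]
    {μ : Measure α} {f : α → F} (hf : eLpNorm f ⊤ μ ≠ ⊤) :
    ∀ᵐ x ∂μ, ‖f x‖ ≤ (eLpNorm f ⊤ μ).toReal := by
  rw [eLpNorm_exponent_top] at hf ⊢
  filter_upwards [ae_le_eLpNormEssSup (f := f) (μ := μ)] with x hx
  simpa only [toReal_enorm] using ENNReal.toReal_mono hf hx

theorem volume_euclideanSpace_coord_eq {ι : Type*} [Fintype ι] (i : ι) (c : ℝ) :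
    volume {y : EuclideanSpace ℝ ι | y i = c} = 0 := by
  classical
  have hmp := (EuclideanSpace.volume_preserving_symm_measurableEquiv_toLp ι).symm
  have hmeas : MeasurableSet {y : EuclideanSpace ℝ ι | y i = c} :=
    (EuclideanSpace.proj (𝕜 := ℝ) i).continuous.measurable (measurableSet_singleton c)
  rw [← hmp.measure_preimage hmeas.nullMeasurableSet]
  refine measure_mono_null (t := Set.pi univ (Function.update (fun _ => univ) i {c}))
    (fun f hf j _ => ?_) ?_
  · rcases eq_or_ne j i with rfl | hj
    · simpa using hf
    · simp [hj]
  · rw [volume_pi_pi]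
    exact Finset.prod_eq_zero (Finset.mem_univ i) (by simp)

section Tiles

variable {α ι F : Type*} [PseudoMetricSpace α] [MeasurableSpace α] [OpensMeasurableSpace α]
  [NormedAddCommGroup F] [NormedSpace ℝ F] {μ : Measure α} {ρ : α → F} {T : ι → Set α}
  {I : Finset ι} {x : α} {ε d N : ℝ}

theorem norm_setIntegral_ball_le_of_tiles (hρ : AEStronglyMeasurable ρ μ)
    (hN : ∀ᵐ y ∂μ, ‖ρ y‖ ≤ N) (hN0 : 0 ≤ N) (hsupp : ∀ᵐ y ∂μ, y ∉ ⋃ i ∈ I, T i → ρ y = 0)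
    (hT : ∀ i ∈ I, MeasurableSet (T i)) (hdisj : (I : Set ι).PairwiseDisjoint T)
    (hdiam : ∀ i ∈ I, ∀ y ∈ T i, ∀ z ∈ T i, dist y z ≤ d)
    (hzero : ∀ i ∈ I, ∫ y in T i, ρ y ∂μ = 0) (hB : μ (ball x ε) ≠ ⊤) :
    ‖∫ y in ball x ε, ρ y ∂μ‖ ≤ N * μ.real (ball x ε \ ball x (ε - d)) := by
  classical
  set B := ball x ε
  set U := ⋃ i ∈ I, T i
  set J := I.filter fun i => T i ⊆ B
  set G := ⋃ i ∈ J, T i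
  have hInt : IntegrableOn ρ B μ :=
    Measure.integrableOn_of_bounded hB hρ (ae_restrict_of_ae hN)
  have hGU : G ⊆ B ∩ U := iUnion₂_subset fun i hi =>
    subset_inter (Finset.mem_filter.1 hi).2 (subset_biUnion_of_mem (Finset.mem_filter.1 hi).1)
  have hG : ∫ y in G, ρ y ∂μ = 0 := by
    rw [integral_biUnion_finset J (fun i hi => hT i (Finset.mem_filter.1 hi).1)
      (hdisj.subset (Finset.coe_subset.2 (Finset.filter_subset _ _)))
      (fun i hi => hInt.mono_set (Finset.mem_filter.1 hi).2)]
    exact Finset.sum_eq_zero fun i hi => hzero i (Finset.mem_filter.1 hi).1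
  have hboundary : (B ∩ U) \ G ⊆ B \ ball x (ε - d) := by
    rintro y ⟨⟨hyB, hyU⟩, hyG⟩
    refine ⟨hyB, fun hy => hyG ?_⟩
    obtain ⟨i, hi, hyi⟩ := mem_iUnion₂.1 hyU
    refine mem_iUnion₂.2 ⟨i, Finset.mem_filter.2 ⟨hi, fun z hz => ?_⟩, hyi⟩
    rw [mem_ball] at hy ⊢
    linarith [dist_triangle z y x, hdiam i hi z hz y hyi]
  have hoff : ∀ᵐ y ∂μ, y ∈ B \ (B ∩ U) → ρ y = 0 := by
    filter_upwards [hsupp] with y hy hyBU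
    exact hy fun hyU => hyBU.2 ⟨hyBU.1, hyU⟩
  have hGmeas : MeasurableSet G :=
    J.measurableSet_biUnion fun i hi => hT i (Finset.mem_filter.1 hi).1
  calc ‖∫ y in B, ρ y ∂μ‖ = ‖∫ y in (B ∩ U) \ G, ρ y ∂μ‖ := by
        rw [setIntegral_eq_of_subset_of_ae_sdiff_eq_zero measurableSet_ball.nullMeasurableSet
          inter_subset_left hoff,
          ← integral_inter_add_sdiff hGmeas (hInt.mono_set inter_subset_left),
          inter_eq_self_of_subset_right hGU, hG, zero_add]
    _ ≤ N * μ.real ((B ∩ U) \ G) :=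
        norm_setIntegral_le_of_norm_le_const_ae
          ((measure_mono (sdiff_subset.trans inter_subset_left)).trans_lt hB.lt_top)
          (ae_restrict_of_ae hN)
    _ ≤ N * μ.real (B \ ball x (ε - d)) := by
        gcongr
        exact measure_ne_top_of_subset sdiff_subset hB

end Tiles

section AddHaar

variable {E : Type*} [NormedAddCommGroup E] [NormedSpace ℝ E] [MeasurableSpace E] [BorelSpace E]
  [FiniteDimensional ℝ E] (μ : Measure E) [μ.IsAddHaarMeasure]

theorem measureReal_ball_sdiff_ball_le (x : E) {ε d : ℝ} (hd : 0 ≤ d) (hdε : d < ε) :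
    μ.real (ball x ε \ ball x (ε - d)) ≤ finrank ℝ E * (d / ε) * μ.real (ball x ε) := by
  have hε : 0 < ε := hd.trans_lt hdε
  have hreal : ∀ r : ℝ, 0 < r → μ.real (ball x r) = r ^ finrank ℝ E * μ.real (ball (0 : E) 1) :=
    fun r hr => by
      rw [measureReal_def, Measure.addHaar_ball_of_pos μ x hr, ENNReal.toReal_mul,
        ENNReal.toReal_ofReal (by positivity), measureReal_def]
  have hbern : 1 - finrank ℝ E * (d / ε) ≤ (1 - d / ε) ^ finrank ℝ E := by
    have := one_add_mul_le_pow (a := -(d / ε))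
      (by linarith [div_le_one_of_le₀ hdε.le hε.le]) (finrank ℝ E)
    simpa [← sub_eq_add_neg] using this
  have hratio : (ε - d) ^ finrank ℝ E = ε ^ finrank ℝ E * (1 - d / ε) ^ finrank ℝ E := by
    rw [← mul_pow]; congr 1; field_simp
  rw [measureReal_sdiff (ball_subset_ball (by linarith)) measurableSet_ball, hreal ε hε,
    hreal (ε - d) (by linarith), hratio]
  have hc : 0 ≤ μ.real (ball (0 : E) 1) := measureReal_nonneg
  have hεn : 0 ≤ ε ^ finrank ℝ E := by positivity
  nlinarith [mul_le_mul_of_nonneg_left hbern (mul_nonneg hεn hc)]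

theorem norm_setAverage_ball_le_of_tiles {ι F : Type*} [NormedAddCommGroup F] [NormedSpace ℝ F]
    {ρ : E → F} {T : ι → Set E} {I : Finset ι} {x : E} {ε d N : ℝ}
    (hρ : AEStronglyMeasurable ρ μ) (hN : ∀ᵐ y ∂μ, ‖ρ y‖ ≤ N) (hN0 : 0 ≤ N)
    (hsupp : ∀ᵐ y ∂μ, y ∉ ⋃ i ∈ I, T i → ρ y = 0)
    (hT : ∀ i ∈ I, MeasurableSet (T i)) (hdisj : (I : Set ι).PairwiseDisjoint T)
    (hdiam : ∀ i ∈ I, ∀ y ∈ T i, ∀ z ∈ T i, dist y z ≤ d)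
    (hzero : ∀ i ∈ I, ∫ y in T i, ρ y ∂μ = 0) (hd : 0 ≤ d) (hdε : d < ε) :
    ‖⨍ y in ball x ε, ρ y ∂μ‖ ≤ finrank ℝ E * (d / ε) * N := by
  have hB : 0 < μ.real (ball x ε) :=
    ENNReal.toReal_pos (measure_ball_pos μ x (hd.trans_lt hdε)).ne' measure_ball_lt_top.ne
  rw [setAverage_eq, norm_smul, norm_inv, Real.norm_of_nonneg hB.le, inv_mul_le_iff₀ hB]
  calc ‖∫ y in ball x ε, ρ y ∂μ‖ ≤ N * μ.real (ball x ε \ ball x (ε - d)) :=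
        norm_setIntegral_ball_le_of_tiles hρ hN hN0 hsupp hT hdisj hdiam hzero
          measure_ball_lt_top.ne
    _ ≤ N * (finrank ℝ E * (d / ε) * μ.real (ball x ε)) := by
        gcongr
        exact measureReal_ball_sdiff_ball_le μ x hd hdε
    _ = μ.real (ball x ε) * (finrank ℝ E * (d / ε) * N) := by ring

end AddHaar

theorem geomMixScale_le {κ ε : ℝ} {ρ : E2 → ℝ} (hε : 0 < ε)
    (h : 0 < κ * (eLpNorm ρ ⊤ volume).toReal →
      ∀ x, |⨍ y in ball x ε, ρ y| < κ * (eLpNorm ρ ⊤ volume).toReal) :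
    geomMixScale κ ρ ≤ ε := by
  by_cases hpos : 0 < κ * (eLpNorm ρ ⊤ volume).toReal
  · exact csInf_le ⟨0, fun t ht => ht.1.le⟩ ⟨hε, h hpos⟩
  · have hempty : {ε : ℝ | 0 < ε ∧
        ∀ x : E2, |⨍ y in ball x ε, ρ y| < κ * (eLpNorm ρ ⊤ volume).toReal} = ∅ :=
      eq_empty_of_forall_notMem fun t ht => hpos ((abs_nonneg _).trans_lt (ht.2 0))
    rw [geomMixScale, hempty, Real.sInf_empty]
    exact hε.le

section Grid

variable {lam t : ℝ} {m k : ℕ}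

theorem eq_floor_of_mem_grid_cell (hlam : 0 < lam) (h₁ : -(1:ℝ)/2 + k * lam < t)
    (h₂ : t < -(1:ℝ)/2 + (k + 1) * lam) : k = ⌊(t + 1 / 2) / lam⌋₊ := by
  have hk : (0 : ℝ) ≤ k * lam := by positivity
  refine ((Nat.floor_eq_iff (div_nonneg (by linarith) hlam.le)).2 ⟨?_, ?_⟩).symm
  · rw [le_div_iff₀ hlam]; linarith
  · rw [div_lt_iff₀ hlam]; linarith

theorem exists_mem_grid_cell (hlam : 0 < lam) (hm : m * lam = 1) (ht : |t| < 1 / 2)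
    (hgrid : ∀ j : ℕ, t ≠ -(1:ℝ)/2 + j * lam) :
    ∃ k < m, -(1:ℝ)/2 + k * lam < t ∧ t < -(1:ℝ)/2 + (k + 1) * lam := by
  obtain ⟨ht₁, ht₂⟩ := abs_lt.1 ht
  have h0 : 0 ≤ (t + 1 / 2) / lam := div_nonneg (by linarith) hlam.le
  refine ⟨⌊(t + 1 / 2) / lam⌋₊, ?_, ?_, ?_⟩
  · rw [Nat.floor_lt h0, div_lt_iff₀ hlam, hm]; linarith
  · refine lt_of_le_of_ne ?_ (hgrid _).symm
    have := Nat.floor_le h0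
    rw [le_div_iff₀ hlam] at this; linarith
  · have := Nat.lt_floor_add_one ((t + 1 / 2) / lam)
    rw [div_lt_iff₀ hlam] at this; linarith

end Grid

theorem measurableSet_tile (lam : ℝ) (k h : ℕ) : MeasurableSet (tile lam k h) := by
  have h₀ : Measurable fun x : E2 => x 0 := (EuclideanSpace.proj (𝕜 := ℝ) 0).continuous.measurable
  have h₁ : Measurable fun x : E2 => x 1 := (EuclideanSpace.proj (𝕜 := ℝ) 1).continuous.measurable
  exact ((measurableSet_lt measurable_const h₀).inter (measurableSet_lt h₀ measurable_const)).inter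
    ((measurableSet_lt measurable_const h₁).inter (measurableSet_lt h₁ measurable_const))

section Tiling

variable {lam : ℝ} {m : ℕ}

theorem pairwiseDisjoint_tile (hlam : 0 < lam) :
    (univ : Set (ℕ × ℕ)).PairwiseDisjoint fun p => tile lam p.1 p.2 := by
  intro p _ q _ hpq
  refine disjoint_left.2 fun y ⟨⟨hp₁, hp₂⟩, hp₃, hp₄⟩ ⟨⟨hq₁, hq₂⟩, hq₃, hq₄⟩ => hpq ?_
  exact Prod.ext ((eq_floor_of_mem_grid_cell hlam hp₁ hp₂).trans
      (eq_floor_of_mem_grid_cell hlam hq₁ hq₂).symm)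
    ((eq_floor_of_mem_grid_cell hlam hp₃ hp₄).trans (eq_floor_of_mem_grid_cell hlam hq₃ hq₄).symm)

theorem dist_le_of_mem_tile {k h : ℕ} {y z : E2} (hy : y ∈ tile lam k h)
    (hz : z ∈ tile lam k h) : dist y z ≤ √2 * lam := by
  obtain ⟨⟨hy₁, hy₂⟩, hy₃, hy₄⟩ := hy
  obtain ⟨⟨hz₁, hz₂⟩, hz₃, hz₄⟩ := hz
  have hlam : 0 ≤ lam := by linarith
  have h₀ : (y 0 - z 0) ^ 2 ≤ lam ^ 2 := sq_le_sq' (by linarith) (by linarith)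
  have h₁ : (y 1 - z 1) ^ 2 ≤ lam ^ 2 := sq_le_sq' (by linarith) (by linarith)
  rw [EuclideanSpace.dist_eq, Fin.sum_univ_two, Real.dist_eq, Real.dist_eq, sq_abs, sq_abs,
    ← Real.sqrt_sq hlam, ← Real.sqrt_mul zero_le_two]
  exact Real.sqrt_le_sqrt (by linarith)

theorem ae_mem_iUnion_tile_of_mem_Qset (hlam : 0 < lam) (hm : m * lam = 1) :
    ∀ᵐ y : E2, y ∈ Qset → y ∈ ⋃ p ∈ Finset.range m ×ˢ Finset.range m, tile lam p.1 p.2 := by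
  have hgrid : ∀ᵐ y : E2, ∀ j : ℕ, y 0 ≠ -(1:ℝ)/2 + j * lam ∧ y 1 ≠ -(1:ℝ)/2 + j * lam := by
    refine ae_all_iff.2 fun j => ?_
    filter_upwards [measure_eq_zero_iff_ae_notMem.1 (volume_euclideanSpace_coord_eq 0 _),
      measure_eq_zero_iff_ae_notMem.1 (volume_euclideanSpace_coord_eq 1 _)] with y h₀ h₁
    exact ⟨h₀, h₁⟩
  filter_upwards [hgrid] with y hy hyQ
  obtain ⟨k, hk, hk₁, hk₂⟩ := exists_mem_grid_cell hlam hm hyQ.1 fun j => (hy j).1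
  obtain ⟨h, hh, hh₁, hh₂⟩ := exists_mem_grid_cell hlam hm hyQ.2 fun j => (hy j).2
  exact mem_iUnion₂.2 ⟨(k, h), Finset.mem_product.2 ⟨Finset.mem_range.2 hk, Finset.mem_range.2 hh⟩,
    ⟨hk₁, hk₂⟩, hh₁, hh₂⟩

theorem abs_setAverage_ball_le_of_integral_tile_eq_zero (hlam : 0 < lam) (hm : m * lam = 1)
    {ρ : E2 → ℝ} {N ε : ℝ} (hρ : Measurable ρ) (hN : ∀ᵐ y : E2, ‖ρ y‖ ≤ N) (hN0 : 0 ≤ N)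
    (hQ : ∀ x ∉ Qset, ρ x = 0)
    (htiles : ∀ k h : ℕ, k < m → h < m → ∫ x in tile lam k h, ρ x = 0) (hε : √2 * lam < ε)
    (x : E2) : |⨍ y in ball x ε, ρ y| ≤ 2 * (√2 * lam / ε) * N := by
  have hsupp : ∀ᵐ y : E2,
      y ∉ ⋃ p ∈ Finset.range m ×ˢ Finset.range m, tile lam p.1 p.2 → ρ y = 0 := by
    filter_upwards [ae_mem_iUnion_tile_of_mem_Qset hlam hm] with y hy hyU
    exact hQ y fun hyQ => hyU (hy hyQ)
  have h := norm_setAverage_ball_le_of_tiles volume (x := x) hρ.aestronglyMeasurable hN hN0 hsupp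
    (fun p _ => measurableSet_tile lam p.1 p.2)
    ((pairwiseDisjoint_tile hlam).subset (subset_univ _))
    (fun p _ y hy z hz => dist_le_of_mem_tile hy hz)
    (fun p hp => htiles p.1 p.2 (Finset.mem_range.1 (Finset.mem_product.1 hp).1)
      (Finset.mem_range.1 (Finset.mem_product.1 hp).2))
    (by positivity) hε
  rwa [finrank_euclideanSpace_fin, Nat.cast_ofNat, Real.norm_eq_abs] at h

end Tiling

/-- If `ρ` is bounded, vanishes outside `Q` and has zero average on every tile
of `T_λ`, then its geometric mixing scale is at most `C₁ λ`, with `C₁` depending only on `κ`. -/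
theorem stmt3 (κ : ℝ) (hκ : κ ∈ Set.Ioo (0:ℝ) 1) :
    ∃ C₁ > 0, ∀ (lam : ℝ) (m : ℕ), 0 < lam → lam < 1 → 0 < m → (m : ℝ) * lam = 1 →
      ∀ ρ : E2 → ℝ, Measurable ρ → (∃ M, ∀ x, |ρ x| ≤ M) →
        (∀ x ∉ Qset, ρ x = 0) →
        (∀ k h : ℕ, k < m → h < m → ∫ x in tile lam k h, ρ x = 0) →
        geomMixScale κ ρ ≤ C₁ * lam := by
  obtain ⟨hκ₀, hκ₁⟩ := hκ
  refine ⟨3 / κ, by positivity, fun lam m hlam _ _ hm ρ hρ ⟨M, hM⟩ hQ htiles => ?_⟩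
  set N := (eLpNorm ρ ⊤ volume).toReal
  have hN : ∀ᵐ y : E2, ‖ρ y‖ ≤ N := ae_norm_le_toReal_eLpNorm_top
    (memLp_top_of_bound hρ.aestronglyMeasurable M (ae_of_all _ hM)).eLpNorm_ne_top
  have hsqrt : √2 < 3 / 2 := by
    rw [Real.sqrt_lt' (by norm_num)]; norm_num
  have hε : √2 * lam < 3 / κ * lam := by
    gcongr
    linarith [(le_div_iff₀ hκ₀).2 (by linarith : 3 * κ ≤ 3)]
  refine geomMixScale_le (by positivity) fun hpos x => ?_
  calc |⨍ y in ball x (3 / κ * lam), ρ y|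
      ≤ 2 * (√2 * lam / (3 / κ * lam)) * N :=
        abs_setAverage_ball_le_of_integral_tile_eq_zero hlam hm hρ hN ENNReal.toReal_nonneg hQ
          htiles hε x
    _ = 2 * √2 / 3 * (κ * N) := by field_simp
    _ < κ * N := by nlinarith
end
end

section
/- Let Q be a measurable subset of ℝ² of finite Lebesgue measure and let Φ: Q → Q be a bijection such that both Φ and Φ^{-1} are measurable and preserve Lebesgue measure. Let A, B, B̃, E ⊆ Q be measurable sets with B̃ ⊆ B, and let Q₁, …, Q_N be a finite measurable partition of Q such that |Φ(A) ∩ Q_i| ≤ |Q_i|/2 for every i. If |A ∩ B̃| − |(Q \ A) ∩ B| − |E| > 0, then there exists an index i such that both |Φ(A ∩ B̃) ∩ Q_i \ E| > 0 and |Φ((Q \ A) \ B) ∩ Q_i \ E| > 0. -/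
open MeasureTheory Metric Set

noncomputable section

/-!
Suppose no cell `Qᵢ` meets both `Φ(A ∩ B̃) \ E` and `Φ((Q \ A) \ B) \ E` in positive measure.
If the first is null, `|Φ(A ∩ B̃) ∩ Qᵢ| ≤ |E ∩ Qᵢ|`. If the second is null, then since `Φ(A)` fills
at most half of `Qᵢ`, `|Φ(A ∩ B̃) ∩ Qᵢ| ≤ |Qᵢ \ Φ(A)|`, and `Q \ Φ(A)` is covered by
`Φ((Q \ A) \ B) ∪ Φ((Q \ A) ∩ B)`, so again `|Φ(A ∩ B̃) ∩ Qᵢ| ≤ |E ∩ Qᵢ| + |Φ((Q \ A) ∩ B) ∩ Qᵢ|`.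
Summing over the cells and using that `Φ` preserves measure gives `|A ∩ B̃| ≤ |E| + |(Q \ A) ∩ B|`,
contradicting the hypothesis.
-/

namespace MeasureTheory

open Function
open scoped ENNReal

variable {α ι : Type*} [MeasurableSpace α] {μ : Measure α}

theorem measure_inter_iUnion_eq_sum [Fintype ι] {P : ι → Set α}
    (hPm : ∀ i, MeasurableSet (P i)) (hPd : Pairwise (Disjoint on P)) (s : Set α) :
    μ (s ∩ ⋃ i, P i) = ∑ i, μ (s ∩ P i) := by
  rw [← Measure.restrict_apply' (MeasurableSet.iUnion hPm), Measure.restrict_iUnion hPd hPm,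
    Measure.sum_apply_of_countable, tsum_fintype]
  simp only [Measure.restrict_apply' (hPm _)]

theorem measure_le_measure_inter_of_measure_diff_eq_zero {s t : Set α} (h : μ (s \ t) = 0) :
    μ s ≤ μ (s ∩ t) := by
  simpa [h] using measure_le_inter_add_sdiff μ s t

theorem measure_half_le_measure_diff {s t : Set α} (hs : μ s ≠ ∞)
    (hhalf : μ (t ∩ s) ≤ μ s / 2) : μ s / 2 ≤ μ (s \ t) := by
  rw [← ENNReal.sub_half hs, tsub_le_iff_left]
  calc μ s ≤ μ (s ∩ t) + μ (s \ t) := measure_le_inter_add_sdiff μ s t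
    _ ≤ μ s / 2 + μ (s \ t) := by rw [inter_comm]; gcongr

theorem measure_inter_le_of_measure_half {P F X Y C E : Set α} (hP : μ P ≠ ∞) (hXF : X ⊆ F)
    (hcover : P \ F ⊆ Y ∪ C) (hhalf : μ (F ∩ P) ≤ μ P / 2)
    (hnull : μ ((X ∩ P) \ E) = 0 ∨ μ ((Y ∩ P) \ E) = 0) :
    μ (X ∩ P) ≤ μ (E ∩ P) + μ (C ∩ P) := by
  rcases hnull with hX | hY
  · calc μ (X ∩ P) ≤ μ (X ∩ P ∩ E) := measure_le_measure_inter_of_measure_diff_eq_zero hX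
      _ ≤ μ (E ∩ P) := measure_mono fun x hx => ⟨hx.2, hx.1.2⟩
      _ ≤ μ (E ∩ P) + μ (C ∩ P) := le_self_add
  · have hYE : μ (Y ∩ P) ≤ μ (E ∩ P) :=
      (measure_le_measure_inter_of_measure_diff_eq_zero hY).trans
        (measure_mono fun x hx => ⟨hx.2, hx.1.2⟩)
    calc μ (X ∩ P) ≤ μ (F ∩ P) := measure_mono (inter_subset_inter_left _ hXF)
      _ ≤ μ P / 2 := hhalf
      _ ≤ μ (P \ F) := measure_half_le_measure_diff hP hhalf
      _ ≤ μ ((Y ∪ C) ∩ P) := measure_mono fun x hx => ⟨hcover hx, hx.1⟩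
      _ ≤ μ (Y ∩ P) + μ (C ∩ P) := by rw [union_inter_distrib_right]; exact measure_union_le _ _
      _ ≤ μ (E ∩ P) + μ (C ∩ P) := by gcongr

theorem exists_cell_pos_measure_of_measure_half [Fintype ι] {P : ι → Set α}
    (hPm : ∀ i, MeasurableSet (P i)) (hPd : Pairwise (Disjoint on P)) (hPfin : ∀ i, μ (P i) ≠ ∞)
    {F X Y C E : Set α} (hXF : X ⊆ F) (hXP : X ⊆ ⋃ i, P i) (hcover : ∀ i, P i \ F ⊆ Y ∪ C)
    (hhalf : ∀ i, μ (F ∩ P i) ≤ μ (P i) / 2) (hgap : μ E + μ C < μ X) :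
    ∃ i, 0 < μ ((X ∩ P i) \ E) ∧ 0 < μ ((Y ∩ P i) \ E) := by
  by_contra! hnone
  have hcell : ∀ i, μ (X ∩ P i) ≤ μ (E ∩ P i) + μ (C ∩ P i) := fun i =>
    measure_inter_le_of_measure_half (hPfin i) hXF (hcover i) (hhalf i) <|
      or_iff_not_imp_left.2 fun h => nonpos_iff_eq_zero.1 (hnone i (pos_iff_ne_zero.2 h))
  refine hgap.not_ge ?_
  calc μ X = ∑ i, μ (X ∩ P i) := by rw [← measure_inter_iUnion_eq_sum hPm hPd, inter_eq_left.2 hXP]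
    _ ≤ ∑ i, (μ (E ∩ P i) + μ (C ∩ P i)) := Finset.sum_le_sum fun i _ => hcell i
    _ = μ (E ∩ ⋃ i, P i) + μ (C ∩ ⋃ i, P i) := by
      rw [Finset.sum_add_distrib, measure_inter_iUnion_eq_sum hPm hPd,
        measure_inter_iUnion_eq_sum hPm hPd]
    _ ≤ μ E + μ C := by gcongr <;> exact inter_subset_left

end MeasureTheory

theorem stmt7_general (Q : Set E2) (hQmeas : MeasurableSet Q) (hQfin : volume Q < ⊤)
    (Φ : E2 → E2) (hbij : Set.BijOn Φ Q Q)
    (himg : ∀ S, S ⊆ Q → MeasurableSet S →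
      MeasurableSet (Φ '' S) ∧ volume (Φ '' S) = volume S)
    (A B Bt E : Set E2) (hAQ : A ⊆ Q) (hEQ : E ⊆ Q)
    (hAm : MeasurableSet A) (hBm : MeasurableSet B) (hBtm : MeasurableSet Bt)
    (N : ℕ) (Qi : Fin N → Set E2) (hQim : ∀ i, MeasurableSet (Qi i))
    (hQidisj : Pairwise (Function.onFun Disjoint Qi)) (hQiunion : (⋃ i, Qi i) = Q)
    (hhalf : ∀ i, volume (Φ '' A ∩ Qi i) ≤ volume (Qi i) / 2)
    (hgap : 0 < (volume (A ∩ Bt)).toReal - (volume ((Q \ A) ∩ B)).toReal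
        - (volume E).toReal) :
    ∃ i : Fin N, 0 < volume ((Φ '' (A ∩ Bt) ∩ Qi i) \ E)
        ∧ 0 < volume ((Φ '' ((Q \ A) \ B) ∩ Qi i) \ E) := by
  have hfin : ∀ {S}, S ⊆ Q → volume S ≠ ⊤ := fun hS => ((measure_mono hS).trans_lt hQfin).ne
  have hQiQ : ∀ i, Qi i ⊆ Q := fun i => hQiunion ▸ subset_iUnion Qi i
  have hABtQ : A ∩ Bt ⊆ Q := inter_subset_left.trans hAQ
  have hCQ : (Q \ A) ∩ B ⊆ Q := inter_subset_left.trans sdiff_subset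
  have hXQ : Φ '' (A ∩ Bt) ⊆ ⋃ i, Qi i := hQiunion ▸ hbij.image_eq ▸ image_mono hABtQ
  have hcover : Q \ Φ '' A ⊆ Φ '' ((Q \ A) \ B) ∪ Φ '' ((Q \ A) ∩ B) := by
    rintro _ ⟨hxQ, hxA⟩
    obtain ⟨y, hyQ, rfl⟩ := hbij.surjOn hxQ
    have hyA : y ∉ A := fun hyA => hxA (mem_image_of_mem Φ hyA)
    by_cases hyB : y ∈ B
    exacts [Or.inr (mem_image_of_mem Φ ⟨⟨hyQ, hyA⟩, hyB⟩),
      Or.inl (mem_image_of_mem Φ ⟨⟨hyQ, hyA⟩, hyB⟩)]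
  have hgap' : volume E + volume (Φ '' ((Q \ A) ∩ B)) < volume (Φ '' (A ∩ Bt)) := by
    rw [(himg _ hABtQ (hAm.inter hBtm)).2, (himg _ hCQ ((hQmeas.diff hAm).inter hBm)).2,
      ← ENNReal.toReal_lt_toReal (ENNReal.add_ne_top.2 ⟨hfin hEQ, hfin hCQ⟩) (hfin hABtQ),
      ENNReal.toReal_add (hfin hEQ) (hfin hCQ)]
    linarith
  exact exists_cell_pos_measure_of_measure_half hQim hQidisj (fun i => hfin (hQiQ i))
    (image_mono inter_subset_left) hXQ
    (fun i => (sdiff_subset_sdiff_left (hQiQ i)).trans hcover) hhalf hgap'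

/-- Pigeonhole argument for a measure-preserving bijection `Φ` of a finite
measure set `Q`: if each cell `Qi i` of a partition of `Q` contains at most half of its measure
of `Φ(A)`, and `|A ∩ B̃| − |(Q \ A) ∩ B| − |E| > 0`, then some cell meets both `Φ(A ∩ B̃) \ E`
and `Φ((Q \ A) \ B) \ E` in positive measure. -/
theorem stmt7 (Q : Set E2) (hQmeas : MeasurableSet Q) (hQfin : volume Q < ⊤)
    (Φ : E2 → E2) (hbij : Set.BijOn Φ Q Q)
    (himg : ∀ S, S ⊆ Q → MeasurableSet S →
      MeasurableSet (Φ '' S) ∧ volume (Φ '' S) = volume S)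
    (hpre : ∀ S, S ⊆ Q → MeasurableSet S →
      MeasurableSet (Q ∩ Φ ⁻¹' S) ∧ volume (Q ∩ Φ ⁻¹' S) = volume S)
    (A B Bt E : Set E2) (hAQ : A ⊆ Q) (hBQ : B ⊆ Q) (hEQ : E ⊆ Q)
    (hAm : MeasurableSet A) (hBm : MeasurableSet B) (hBtm : MeasurableSet Bt)
    (hEm : MeasurableSet E) (hBtB : Bt ⊆ B)
    (N : ℕ) (Qi : Fin N → Set E2) (hQim : ∀ i, MeasurableSet (Qi i))
    (hQidisj : Pairwise (Function.onFun Disjoint Qi)) (hQiunion : (⋃ i, Qi i) = Q)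
    (hhalf : ∀ i, volume (Φ '' A ∩ Qi i) ≤ volume (Qi i) / 2)
    (hgap : 0 < (volume (A ∩ Bt)).toReal - (volume ((Q \ A) ∩ B)).toReal
        - (volume E).toReal) :
    ∃ i : Fin N, 0 < volume ((Φ '' (A ∩ Bt) ∩ Qi i) \ E)
        ∧ 0 < volume ((Φ '' ((Q \ A) \ B) ∩ Qi i) \ E) :=
  stmt7_general Q hQmeas hQfin Φ hbij himg A B Bt E hAQ hEQ hAm hBm hBtm N Qi hQim hQidisj hQiunion
    hhalf hgap
end
end

section
/- Let β ∈ (0,1) and let C, C', γ₁, γ₂, a₁, a₂ be positive real numbers. Let (T_n)_{n∈ℕ} be a strictly increasing sequence of nonnegative real numbers tending to +∞. Then there is no sequence (m_n)_{n∈ℕ} of positive real numbers satisfying simultaneously: (i) γ₁ exp(−a₁ T_n) ≤ m_n ≤ γ₂ exp(−a₂ T_n) for all n ∈ ℕ, and (ii) m_n ≤ C' exp( C β^n (T_{n+k} − T_n) ) · m_{n+k} for all n, k ∈ ℕ. -/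
/-!
Since `β < 1`, some `n` has `C β^n < a₂`. Feeding the upper exponential bound on `m (n + k)` into the
recursive bound at this `n` gives `m n ≤ K exp(-(a₂ - C β^n) T (n + k))` for every `k`, with `K`
independent of `k`; letting `k → ∞` forces `m n ≤ 0`.
-/

open Filter Real Topology

lemma nonpos_of_forall_le_mul_exp_neg {x K ε : ℝ} {t : ℕ → ℝ} (hε : 0 < ε)
    (ht : Tendsto t atTop atTop) (h : ∀ k, x ≤ K * exp (-ε * t k)) : x ≤ 0 := by
  have hexp : Tendsto (fun k => exp (-(ε * t k))) atTop (𝓝 0) :=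
    tendsto_exp_neg_atTop_nhds_zero.comp (ht.const_mul_atTop hε)
  have hlim : Tendsto (fun k => K * exp (-ε * t k)) atTop (𝓝 0) := by
    simpa only [neg_mul, mul_zero] using hexp.const_mul K
  exact ge_of_tendsto' hlim h

lemma le_mul_exp_neg_of_le_mul_exp {x y C' c a γ s t : ℝ} (hC' : 0 ≤ C')
    (hxy : x ≤ C' * exp (c * (t - s)) * y) (hy : y ≤ γ * exp (-a * t)) :
    x ≤ C' * γ * exp (-c * s) * exp (-(a - c) * t) :=
  calc x ≤ C' * exp (c * (t - s)) * (γ * exp (-a * t)) := hxy.trans (by gcongr)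
    _ = C' * γ * exp (-c * s + -(a - c) * t) := by rw [mul_mul_mul_comm, ← exp_add]; ring_nf
    _ = C' * γ * exp (-c * s) * exp (-(a - c) * t) := by rw [exp_add]; ring

theorem stmt11_general (β C C' γ₁ γ₂ a₁ a₂ : ℝ) (hβ : β ∈ Set.Ioo (0:ℝ) 1)
    (hC' : 0 < C') (ha₂ : 0 < a₂) (T : ℕ → ℝ) (hTtop : Tendsto T atTop atTop) :
    ¬ ∃ m : ℕ → ℝ, (∀ n, 0 < m n) ∧
      (∀ n, γ₁ * Real.exp (-a₁ * T n) ≤ m n ∧ m n ≤ γ₂ * Real.exp (-a₂ * T n)) ∧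
      (∀ n k : ℕ, m n ≤ C' * Real.exp (C * β ^ n * (T (n + k) - T n)) * m (n + k)) := by
  rintro ⟨m, hm_pos, hm_bounds, hm_rec⟩
  have hpow : Tendsto (fun n : ℕ => C * β ^ n) atTop (𝓝 0) := by
    simpa only [mul_zero] using (tendsto_pow_atTop_nhds_zero_of_lt_one hβ.1.le hβ.2).const_mul C
  obtain ⟨n, hn⟩ := (hpow.eventually (eventually_lt_nhds ha₂)).exists
  have hTshift : Tendsto (fun k => T (n + k)) atTop atTop :=
    hTtop.comp (by simpa only [add_comm] using tendsto_add_atTop_nat n)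
  have hle : m n ≤ 0 := nonpos_of_forall_le_mul_exp_neg (sub_pos.2 hn) hTshift fun k =>
    le_mul_exp_neg_of_le_mul_exp hC'.le (hm_rec n k) (hm_bounds (n + k)).2
  exact (hm_pos n).not_ge hle

/-- No sequence of positive reals can simultaneously be squeezed between two
exponentials `γ₁ exp(−a₁ T_n) ≤ m_n ≤ γ₂ exp(−a₂ T_n)` along a strictly increasing sequence of
nonnegative times `T_n → ∞` and satisfy the recursive bound
`m_n ≤ C' exp(C β^n (T_{n+k} − T_n)) m_{n+k}` with `β ∈ (0,1)`. -/
theorem stmt11 (β C C' γ₁ γ₂ a₁ a₂ : ℝ) (hβ : β ∈ Set.Ioo (0:ℝ) 1)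
    (hC : 0 < C) (hC' : 0 < C') (hγ₁ : 0 < γ₁) (hγ₂ : 0 < γ₂)
    (ha₁ : 0 < a₁) (ha₂ : 0 < a₂)
    (T : ℕ → ℝ) (hT0 : ∀ n, 0 ≤ T n) (hTmono : StrictMono T)
    (hTtop : Tendsto T atTop atTop) :
    ¬ ∃ m : ℕ → ℝ, (∀ n, 0 < m n) ∧
      (∀ n, γ₁ * Real.exp (-a₁ * T n) ≤ m n ∧ m n ≤ γ₂ * Real.exp (-a₂ * T n)) ∧
      (∀ n k : ℕ, m n ≤ C' * Real.exp (C * β ^ n * (T (n + k) - T n)) * m (n + k)) :=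
  stmt11_general β C C' γ₁ γ₂ a₁ a₂ hβ hC' ha₂ T hTtop
end
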